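/- Let 𝒜 be a graded algebra over ℂ and f = (f_t)_{t≥1} an automorphism of 𝒜 (each f_t : 𝒜_t → 𝒜_t invertible linear and f_{s+t}(xy) = f_s(x) f_t(y) for all x ∈ 𝒜_s, y ∈ 𝒜_t). If 𝒜 satisfies condition (5.2), then for all r, s, t ∈ {1,2,…}: Ker( M_{r,s,t} ∘ (1_{𝒜_r} ⊗ f_s^r ⊗ f_t^{r+s}) ) = Ker( M_{r,s} ∘ (1_{𝒜_r} ⊗ f_s^r) ) ⊗ 𝒜_t + 𝒜_r ⊗ Ker( M_{s,t} ∘ (1_{𝒜_s} ⊗ f_t^s) ), where f_t^s denotes f_t iterated s times; that is, the twisted graded algebra 𝒜^{(f)} also satisfies condition (5.2). -/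

import Mathlib

/-!
The twisted triple product is `M_{r,s,t} ∘ Φ` with `Φ = 1 ⊗ f^r ⊗ f^{r+s}` invertible, so its
kernel is the preimage under `Φ` of `Ker M_{r,s,t} = K_{r,s} ⊗ 𝒜_t + 𝒜_r ⊗ K_{s,t}`. Since `Φ` is
a tensor product of bijections, this preimage is `(1 ⊗ f^r)⁻¹ K_{r,s} ⊗ 𝒜_t + 𝒜_r ⊗
(f^r ⊗ f^{r+s})⁻¹ K_{s,t}`. The first summand is the twisted kernel by definition; for the second,
multiplicativity of `f` gives `M_{s,t} ∘ (f^r ⊗ f^{r+s}) = f^r ∘ M_{s,t} ∘ (1 ⊗ f^s)`, and `f^r`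
is injective.
-/

open TensorProduct

section Graded

variable (A : ℕ → Type*) [∀ t, AddCommGroup (A t)] [∀ t, Module ℂ (A t)]
variable (mul : ∀ s t : ℕ, A s →ₗ[ℂ] A t →ₗ[ℂ] A (s + t))

/-- The multiplication map `M_{s,t} : 𝒜_s ⊗ 𝒜_t → 𝒜_{s+t}`. -/
noncomputable def M2 (s t : ℕ) : (A s ⊗[ℂ] A t) →ₗ[ℂ] A (s + t) :=
  TensorProduct.lift (mul s t)

/-- The multiplication map `M_{r,s,t} : (𝒜_r ⊗ 𝒜_s) ⊗ 𝒜_t → 𝒜_{r+s+t}`. -/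
noncomputable def M3 (r s t : ℕ) : ((A r ⊗[ℂ] A s) ⊗[ℂ] A t) →ₗ[ℂ] A (r + s + t) :=
  (M2 A mul (r + s) t).comp (TensorProduct.map (M2 A mul r s) LinearMap.id)

/-- Associativity of the graded multiplication. -/
def GradedAssoc : Prop :=
  ∀ (r s t : ℕ) (x : A r) (y : A s) (z : A t),
    HEq (mul (r + s) t (mul r s x y) z) (mul r (s + t) x (mul s t y z))

/-- Condition (5.2): `Ker M_{r,s,t} = (Ker M_{r,s}) ⊗ 𝒜_t + 𝒜_r ⊗ (Ker M_{s,t})`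
for all positive `r`, `s`, `t`. -/
def Cond52 : Prop :=
  ∀ r s t : ℕ, 1 ≤ r → 1 ≤ s → 1 ≤ t →
    LinearMap.ker (M3 A mul r s t) =
      LinearMap.range (TensorProduct.mapIncl (LinearMap.ker (M2 A mul r s))
          (⊤ : Submodule ℂ (A t))) ⊔
        Submodule.map (TensorProduct.assoc ℂ (A r) (A s) (A t)).symm.toLinearMap
          (LinearMap.range (TensorProduct.mapIncl (⊤ : Submodule ℂ (A r))
            (LinearMap.ker (M2 A mul s t))))

/-- Condition (5.3): `M_{s,t}` is surjective for all positive `s`, `t`. -/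
def Cond53 : Prop :=
  ∀ s t : ℕ, 1 ≤ s → 1 ≤ t → Function.Surjective (M2 A mul s t)


end Graded

namespace TensorProduct

variable {R M N P M' N' P' : Type*} [CommRing R]
  [AddCommGroup M] [Module R M] [AddCommGroup N] [Module R N] [AddCommGroup P] [Module R P]
  [AddCommGroup M'] [Module R M'] [AddCommGroup N'] [Module R N'] [AddCommGroup P'] [Module R P']

theorem map_range_mapIncl (φ : M →ₗ[R] M') (ψ : N →ₗ[R] N') (p : Submodule R M)
    (q : Submodule R N) :
    (LinearMap.range (mapIncl p q)).map (map φ ψ) =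
      LinearMap.range (mapIncl (p.map φ) (q.map ψ)) := by
  rw [← LinearMap.range_comp, ← map_comp, range_map, range_mapIncl, LinearMap.range_comp,
    LinearMap.range_comp, Submodule.range_subtype, Submodule.range_subtype]

theorem comap_range_mapIncl {φ : M →ₗ[R] M'} {ψ : N →ₗ[R] N'} (hφ : Function.Bijective φ)
    (hψ : Function.Bijective ψ) (p : Submodule R M') (q : Submodule R N') :
    (LinearMap.range (mapIncl p q)).comap (map φ ψ) =
      LinearMap.range (mapIncl (p.comap φ) (q.comap ψ)) := by
  have hφψ := map_bijective hφ hψ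
  apply Submodule.map_injective_of_injective hφψ.injective
  rw [Submodule.map_comap_eq_of_surjective hφψ.surjective, map_range_mapIncl,
    Submodule.map_comap_eq_of_surjective hφ.surjective,
    Submodule.map_comap_eq_of_surjective hψ.surjective]

theorem comap_map_assoc_symm (φ : M →ₗ[R] M') (ψ : N →ₗ[R] N') (χ : P →ₗ[R] P')
    (S : Submodule R (M' ⊗[R] (N' ⊗[R] P'))) :
    (S.map (TensorProduct.assoc R M' N' P').symm.toLinearMap).comap (map (map φ ψ) χ) =
      (S.comap (map φ (map ψ χ))).map (TensorProduct.assoc R M N P).symm.toLinearMap := by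
  rw [Submodule.map_equiv_eq_comap_symm, Submodule.map_equiv_eq_comap_symm,
    LinearEquiv.symm_symm, LinearEquiv.symm_symm, ← Submodule.comap_comp,
    ← map_map_comp_assoc_eq, Submodule.comap_comp]

theorem comap_map_map_range_mapIncl_sup {φ : M →ₗ[R] M'} {ψ : N →ₗ[R] N'} {χ : P →ₗ[R] P'}
    (hφ : Function.Bijective φ) (hψ : Function.Bijective ψ) (hχ : Function.Bijective χ)
    (K : Submodule R (M' ⊗[R] N')) (L : Submodule R (N' ⊗[R] P')) :
    (LinearMap.range (mapIncl K ⊤) ⊔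
        (LinearMap.range (mapIncl ⊤ L)).map
          (TensorProduct.assoc R M' N' P').symm.toLinearMap).comap (map (map φ ψ) χ) =
      LinearMap.range (mapIncl (K.comap (map φ ψ)) ⊤) ⊔
        (LinearMap.range (mapIncl ⊤ (L.comap (map ψ χ)))).map
          (TensorProduct.assoc R M N P).symm.toLinearMap := by
  have hΦ := map_bijective (map_bijective hφ hψ) hχ
  have hrange := LinearMap.range_eq_top.mpr hΦ.surjective
  rw [Submodule.comap_sup_of_injective hΦ.injective (hrange ▸ le_top) (hrange ▸ le_top),
    comap_range_mapIncl (map_bijective hφ hψ) hχ, Submodule.comap_top, comap_map_assoc_symm,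
    comap_range_mapIncl hφ (map_bijective hψ hχ), Submodule.comap_top]

end TensorProduct

theorem LinearEquiv.bijective_toLinearMap_pow {R M : Type*} [Semiring R] [AddCommMonoid M]
    [Module R M] (e : M ≃ₗ[R] M) (n : ℕ) : Function.Bijective (e.toLinearMap ^ n) := by
  rw [Module.End.coe_pow]
  exact e.bijective.iterate n

section Twist

variable {A : ℕ → Type*} [∀ t, AddCommGroup (A t)] [∀ t, Module ℂ (A t)]
  {mul : ∀ s t : ℕ, A s →ₗ[ℂ] A t →ₗ[ℂ] A (s + t)} {f : ∀ t, A t ≃ₗ[ℂ] A t}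

theorem pow_apply_mul (hf : ∀ s t : ℕ, 1 ≤ s → 1 ≤ t → ∀ (x : A s) (y : A t),
      f (s + t) (mul s t x y) = mul s t (f s x) (f t y))
    {s t : ℕ} (hs : 1 ≤ s) (ht : 1 ≤ t) (n : ℕ) (x : A s) (y : A t) :
    ((f (s + t)).toLinearMap ^ n) (mul s t x y) =
      mul s t (((f s).toLinearMap ^ n) x) (((f t).toLinearMap ^ n) y) := by
  induction n with
  | zero => rfl
  | succ n ih =>
    simp only [pow_succ', Module.End.mul_apply, ih, LinearEquiv.coe_coe, hf s t hs ht]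

theorem ker_M2_comp_map_pow (hf : ∀ s t : ℕ, 1 ≤ s → 1 ≤ t → ∀ (x : A s) (y : A t),
      f (s + t) (mul s t x y) = mul s t (f s x) (f t y))
    {s t : ℕ} (hs : 1 ≤ s) (ht : 1 ≤ t) (n m : ℕ) :
    LinearMap.ker (M2 A mul s t ∘ₗ
        TensorProduct.map ((f s).toLinearMap ^ n) ((f t).toLinearMap ^ (n + m))) =
      LinearMap.ker (M2 A mul s t ∘ₗ TensorProduct.map LinearMap.id ((f t).toLinearMap ^ m)) := by
  have hcomp : M2 A mul s t ∘ₗ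
      TensorProduct.map ((f s).toLinearMap ^ n) ((f t).toLinearMap ^ (n + m)) =
      ((f (s + t)).toLinearMap ^ n) ∘ₗ
        M2 A mul s t ∘ₗ TensorProduct.map LinearMap.id ((f t).toLinearMap ^ m) := by
    ext x y
    simp [M2, pow_add, pow_apply_mul hf hs ht]
  rw [hcomp, LinearMap.ker_comp_of_ker_eq_bot _
    (LinearMap.ker_eq_bot.mpr ((f (s + t)).bijective_toLinearMap_pow n).injective)]

end Twist

theorem stmt_16_general (A : ℕ → Type*) [∀ t, AddCommGroup (A t)] [∀ t, Module ℂ (A t)]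
    (mul : ∀ s t : ℕ, A s →ₗ[ℂ] A t →ₗ[ℂ] A (s + t))
    (f : ∀ t, A t ≃ₗ[ℂ] A t)
    (hf : ∀ s t : ℕ, 1 ≤ s → 1 ≤ t → ∀ (x : A s) (y : A t),
      f (s + t) (mul s t x y) = mul s t (f s x) (f t y))
    (h52 : Cond52 A mul) :
    ∀ r s t : ℕ, 1 ≤ r → 1 ≤ s → 1 ≤ t →
      LinearMap.ker
          ((M3 A mul r s t).comp
            (TensorProduct.map
              (TensorProduct.map LinearMap.id ((f s).toLinearMap ^ r))
              ((f t).toLinearMap ^ (r + s)))) =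
        LinearMap.range (TensorProduct.mapIncl
            (LinearMap.ker ((M2 A mul r s).comp
              (TensorProduct.map LinearMap.id ((f s).toLinearMap ^ r))))
            (⊤ : Submodule ℂ (A t))) ⊔
          Submodule.map (TensorProduct.assoc ℂ (A r) (A s) (A t)).symm.toLinearMap
            (LinearMap.range (TensorProduct.mapIncl (⊤ : Submodule ℂ (A r))
              (LinearMap.ker ((M2 A mul s t).comp
                (TensorProduct.map LinearMap.id ((f t).toLinearMap ^ s)))))) := by
  intro r s t hr hs ht
  rw [LinearMap.ker_comp, h52 r s t hr hs ht,
    TensorProduct.comap_map_map_range_mapIncl_sup Function.bijective_id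
      ((f s).bijective_toLinearMap_pow r) ((f t).bijective_toLinearMap_pow (r + s)),
    ← LinearMap.ker_comp, ← LinearMap.ker_comp, ker_M2_comp_map_pow hf hs ht r s]

theorem stmt_16 (A : ℕ → Type*) [∀ t, AddCommGroup (A t)] [∀ t, Module ℂ (A t)]
    (mul : ∀ s t : ℕ, A s →ₗ[ℂ] A t →ₗ[ℂ] A (s + t)) (hassoc : GradedAssoc A mul)
    (f : ∀ t, A t ≃ₗ[ℂ] A t)
    (hf : ∀ s t : ℕ, 1 ≤ s → 1 ≤ t → ∀ (x : A s) (y : A t),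
      f (s + t) (mul s t x y) = mul s t (f s x) (f t y))
    (h52 : Cond52 A mul) :
    ∀ r s t : ℕ, 1 ≤ r → 1 ≤ s → 1 ≤ t →
      LinearMap.ker
          ((M3 A mul r s t).comp
            (TensorProduct.map
              (TensorProduct.map LinearMap.id ((f s).toLinearMap ^ r))
              ((f t).toLinearMap ^ (r + s)))) =
        LinearMap.range (TensorProduct.mapIncl
            (LinearMap.ker ((M2 A mul r s).comp
              (TensorProduct.map LinearMap.id ((f s).toLinearMap ^ r))))
            (⊤ : Submodule ℂ (A t))) ⊔
          Submodule.map (TensorProduct.assoc ℂ (A r) (A s) (A t)).symm.toLinearMap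
            (LinearMap.range (TensorProduct.mapIncl (⊤ : Submodule ℂ (A r))
              (LinearMap.ker ((M2 A mul s t).comp
                (TensorProduct.map LinearMap.id ((f t).toLinearMap ^ s)))))) :=
  stmt_16_general A mul f hf h52
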